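/- arXiv:1308.2988 — 6 statements merged into one kernel-verified Lean document; each statement's English description precedes it below -/
import Mathlib

section
/- Let A be a finite set, π a probability distribution on A, and J a self-coupling of π (a probability distribution on A×A whose both marginals equal π). Then for any a ∈ A, replacing the values J(b,c) for b,c ≠ a by nearest multiples of 1/N and defining the remaining entries so that the marginals equal a given distribution π' with ‖π'−π‖_∞ < ε, yields a function J' : A×A → ℝ with values in (1/N)ℤ, with both marginals equal to π', satisfying ‖J'−J‖_∞ < 2|A|ε + |A|²/N; moreover if min_{a,b} J(a,b) > 2|A|ε + |A|²/N then J' is everywhere positive, hence a self-coupling of π'. -/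
/-!
Round the entries of `J` away from row and column `a` to the lattice `(1/N)ℤ`, then fill in row
and column `a` so that both marginals equal `π'`. Since `J` has marginals `π`, each filled-in
entry differs from the corresponding entry of `J` by the marginal error `|π' - π| < ε` plus the
accumulated rounding (or, at the corner, edge) errors of the other entries of its row or column;
this gives `|J' - J| < |A| ε + (|A| - 1)² / (2N)`. Lattice membership is preserved because the
fill-in only takes differences and sums of lattice points.
-/

open Finset

lemma mem_zmultiples_inv_natCast_iff {K : Type*} [DivisionRing K] {N : ℕ} {x : K} :
    x ∈ AddSubgroup.zmultiples ((N : K)⁻¹) ↔ ∃ k : ℤ, x = k / N := by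
  simp only [AddSubgroup.mem_zmultiples_iff, zsmul_eq_mul, div_eq_mul_inv, eq_comm]

lemma abs_round_mul_div_sub_le {K : Type*} [Field K] [LinearOrder K] [IsStrictOrderedRing K]
    [FloorRing K] {N : K} (hN : 0 < N) (x : K) :
    |round (N * x) / N - x| ≤ 1 / (2 * N) := by
  have h : round (N * x) / N - x = -(N * x - round (N * x)) / N := by
    field_simp; ring
  calc |round (N * x) / N - x| = |N * x - round (N * x)| / N := by
        rw [h, abs_div, abs_neg, abs_of_pos hN]
    _ ≤ 1 / 2 / N := by gcongr; exact abs_sub_round _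
    _ = 1 / (2 * N) := by rw [div_div]

lemma abs_sub_le_abs_sum_sub_add_card_mul {ι K : Type*} [Fintype ι] [DecidableEq ι] [Field K]
    [LinearOrder K] [IsStrictOrderedRing K] {f g : ι → K} {a : ι} {δ : K}
    (h : ∀ i ≠ a, |f i - g i| ≤ δ) :
    |f a - g a| ≤ |∑ i, f i - ∑ i, g i| + ((Fintype.card ι : K) - 1) * δ := by
  have hsplit : f a - g a = (∑ i, f i - ∑ i, g i) - ∑ i ∈ univ.erase a, (f i - g i) := by
    rw [sum_sub_distrib, ← add_sum_erase _ f (mem_univ a), ← add_sum_erase _ g (mem_univ a)]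
    ring
  have hrest : |∑ i ∈ univ.erase a, (f i - g i)| ≤ ((Fintype.card ι : K) - 1) * δ := by
    calc |∑ i ∈ univ.erase a, (f i - g i)| ≤ ∑ i ∈ univ.erase a, |f i - g i| :=
          abs_sum_le_sum_abs _ _
      _ ≤ #(univ.erase a) • δ := sum_le_card_nsmul _ _ _ fun i hi => h i (ne_of_mem_erase hi)
      _ = ((Fintype.card ι : K) - 1) * δ := by
          rw [nsmul_eq_mul, cast_card_erase_of_mem (mem_univ a), card_univ]
  rw [hsplit]
  exact (abs_sub _ _).trans (by gcongr)

section FillMarginals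

variable {A M : Type*} [Fintype A] [DecidableEq A] [AddCommGroup M]

/-- The entries `(b, a)` and `(a, c)` for `b, c ≠ a` make the rows and columns `≠ a` sum to `p`;
the corner makes row `a` sum to `p a`, and column `a` then sums to `p a` by exchanging sums. -/
def fillMarginals (a : A) (p : A → M) (R : A → A → M) (b c : A) : M :=
  if b = a then
    if c = a then p a - ∑ c' ∈ univ.erase a, (p c' - ∑ b' ∈ univ.erase a, R b' c')
    else p c - ∑ b' ∈ univ.erase a, R b' c
  else if c = a then p b - ∑ c' ∈ univ.erase a, R b c'
  else R b c

variable {a : A} {p : A → M} {R : A → A → M}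

lemma fillMarginals_self_self :
    fillMarginals a p R a a = p a - ∑ c' ∈ univ.erase a, (p c' - ∑ b' ∈ univ.erase a, R b' c') :=
  by simp [fillMarginals]

lemma fillMarginals_self_left {c : A} (hc : c ≠ a) :
    fillMarginals a p R a c = p c - ∑ b' ∈ univ.erase a, R b' c := by
  simp [fillMarginals, hc]

lemma fillMarginals_self_right {b : A} (hb : b ≠ a) :
    fillMarginals a p R b a = p b - ∑ c' ∈ univ.erase a, R b c' := by
  simp [fillMarginals, hb]

lemma fillMarginals_of_ne {b c : A} (hb : b ≠ a) (hc : c ≠ a) :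
    fillMarginals a p R b c = R b c := by
  simp [fillMarginals, hb, hc]

theorem sum_fillMarginals_right (b : A) : ∑ c, fillMarginals a p R b c = p b := by
  rw [← add_sum_erase _ _ (mem_univ a)]
  by_cases hb : b = a
  · subst hb
    rw [fillMarginals_self_self,
      sum_congr rfl fun c hc => fillMarginals_self_left (ne_of_mem_erase hc)]
    abel
  · rw [fillMarginals_self_right hb,
      sum_congr rfl fun c hc => fillMarginals_of_ne hb (ne_of_mem_erase hc)]
    abel

theorem sum_fillMarginals_left (c : A) : ∑ b, fillMarginals a p R b c = p c := by
  rw [← add_sum_erase _ _ (mem_univ a)]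
  by_cases hc : c = a
  · subst hc
    rw [fillMarginals_self_self,
      sum_congr rfl fun b hb => fillMarginals_self_right (ne_of_mem_erase hb),
      sum_sub_distrib, sum_sub_distrib, sum_comm]
    abel
  · rw [fillMarginals_self_left hc,
      sum_congr rfl fun b hb => fillMarginals_of_ne (ne_of_mem_erase hb) hc]
    abel

theorem fillMarginals_mem {G : AddSubgroup M} (hp : ∀ b, p b ∈ G) (hR : ∀ b c, R b c ∈ G)
    (b c : A) : fillMarginals a p R b c ∈ G := by
  unfold fillMarginals
  split_ifs
  · exact G.sub_mem (hp a)
      (G.sum_mem fun c' _ => G.sub_mem (hp c') (G.sum_mem fun b' _ => hR b' c'))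
  · exact G.sub_mem (hp c) (G.sum_mem fun b' _ => hR b' c)
  · exact G.sub_mem (hp b) (G.sum_mem fun c' _ => hR b c')
  · exact hR b c

end FillMarginals

section Perturbation

variable {A K : Type*} [Fintype A] [DecidableEq A] [Field K] [LinearOrder K] [IsStrictOrderedRing K]
  {a : A} {π π' : A → K} {J R : A → A → K} {δ : K}

lemma abs_fillMarginals_self_left_sub_le (hJ : ∀ c, ∑ b, J b c = π c)
    (hR : ∀ b c, |R b c - J b c| ≤ δ) {c : A} (hc : c ≠ a) :
    |fillMarginals a π' R a c - J a c| ≤ |π' c - π c| + ((Fintype.card A : K) - 1) * δ := by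
  have h := abs_sub_le_abs_sum_sub_add_card_mul (f := fun b => fillMarginals a π' R b c)
    (g := fun b => J b c) (a := a) fun b hb => by rw [fillMarginals_of_ne hb hc]; exact hR b c
  rwa [sum_fillMarginals_left, hJ] at h

lemma abs_fillMarginals_self_right_sub_le (hJ : ∀ b, ∑ c, J b c = π b)
    (hR : ∀ b c, |R b c - J b c| ≤ δ) {b : A} (hb : b ≠ a) :
    |fillMarginals a π' R b a - J b a| ≤ |π' b - π b| + ((Fintype.card A : K) - 1) * δ := by
  have h := abs_sub_le_abs_sum_sub_add_card_mul (f := fillMarginals a π' R b)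
    (g := J b) (a := a) fun c hc => by rw [fillMarginals_of_ne hb hc]; exact hR b c
  rwa [sum_fillMarginals_right, hJ] at h

theorem abs_fillMarginals_sub_lt {ε : K} (hJrow : ∀ b, ∑ c, J b c = π b)
    (hJcol : ∀ c, ∑ b, J b c = π c) (hclose : ∀ b, |π' b - π b| < ε)
    (hR : ∀ b c, |R b c - J b c| ≤ δ) (b c : A) :
    |fillMarginals a π' R b c - J b c| <
      (Fintype.card A : K) * ε + ((Fintype.card A : K) - 1) ^ 2 * δ := by
  have hε : 0 < ε := (abs_nonneg _).trans_lt (hclose a)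
  have hδ : 0 ≤ δ := (abs_nonneg _).trans (hR a a)
  have two_le_card {x : A} (hx : x ≠ a) : 2 ≤ (Fintype.card A : K) := by
    exact_mod_cast (Fintype.one_lt_card_iff.mpr ⟨x, a, hx⟩ : 1 < Fintype.card A)
  have edge_lt {x : A} (hx : x ≠ a) {y : K}
      (hy : y ≤ |π' x - π x| + ((Fintype.card A : K) - 1) * δ) :
      y < (Fintype.card A : K) * ε + ((Fintype.card A : K) - 1) ^ 2 * δ := by
    have := two_le_card hx
    nlinarith [hclose x, mul_nonneg (mul_nonneg (sub_nonneg.mpr this)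
      (sub_nonneg.mpr (one_le_two.trans this))) hδ]
  rcases eq_or_ne b a with hb | hb <;> rcases eq_or_ne c a with hc | hc
  · rw [hb, hc]
    have h := abs_sub_le_abs_sum_sub_add_card_mul (f := fillMarginals a π' R a) (g := J a) (a := a)
      (δ := ε + ((Fintype.card A : K) - 1) * δ) fun c hc =>
        (abs_fillMarginals_self_left_sub_le hJcol hR hc).trans (by linarith [hclose c])
    rw [sum_fillMarginals_right, hJrow] at h
    linarith [hclose a]
  · rw [hb]
    exact edge_lt hc (abs_fillMarginals_self_left_sub_le hJcol hR hc)
  · rw [hc]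
    exact edge_lt hb (abs_fillMarginals_self_right_sub_le hJrow hR hb)
  · have := two_le_card hb
    rw [fillMarginals_of_ne hb hc]
    nlinarith [hR b c, mul_nonneg (mul_nonneg (sub_nonneg.mpr this)
      (by linarith : (0 : K) ≤ Fintype.card A)) hδ]

end Perturbation

lemma mul_add_sub_one_sq_mul_le {n ε N : ℝ} (hn : 1 ≤ n) (hε : 0 ≤ ε) (hN : 0 < N) :
    n * ε + (n - 1) ^ 2 * (1 / (2 * N)) ≤ 2 * n * ε + n ^ 2 / N := by
  have hsq : (n - 1) ^ 2 * (1 / (2 * N)) ≤ n ^ 2 / N := by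
    rw [mul_one_div, div_le_div_iff₀ (by positivity) hN]
    nlinarith [mul_le_mul_of_nonneg_right (by nlinarith : (n - 1) ^ 2 ≤ 2 * n ^ 2) hN.le]
  nlinarith [mul_nonneg (zero_le_one.trans hn) hε]

theorem stmt0_general {A : Type*} [Fintype A] [DecidableEq A]
    (π π' : A → ℝ) (J : A → A → ℝ) (ε : ℝ) (N : ℕ) (a : A)
    (hJ1 : ∀ b, ∑ c, J b c = π b) (hJ2 : ∀ c, ∑ b, J b c = π c)
    (hN : 0 < N)
    (hclose : ∀ b, |π' b - π b| < ε)
    (hdyad : ∀ b, ∃ k : ℤ, π' b = (k : ℝ) / N) :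
    ∃ J' : A → A → ℝ,
      (∀ b c, ∃ k : ℤ, J' b c = (k : ℝ) / N) ∧
      (∀ b, ∑ c, J' b c = π' b) ∧
      (∀ c, ∑ b, J' b c = π' c) ∧
      (∀ b c, |J' b c - J b c| < 2 * (Fintype.card A : ℝ) * ε + (Fintype.card A : ℝ) ^ 2 / N) ∧
      ((∀ b c, 2 * (Fintype.card A : ℝ) * ε + (Fintype.card A : ℝ) ^ 2 / N < J b c) →
        ∀ b c, 0 < J' b c) := by
  have hN' : (0 : ℝ) < N := by exact_mod_cast hN
  have hn : (1 : ℝ) ≤ Fintype.card A := by exact_mod_cast Fintype.card_pos_iff.mpr ⟨a⟩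
  have hε : 0 ≤ ε := (abs_nonneg _).trans (hclose a).le
  set R : A → A → ℝ := fun b c => round (N * J b c) / N
  have hbound (b c : A) : |fillMarginals a π' R b c - J b c| <
      2 * (Fintype.card A : ℝ) * ε + (Fintype.card A : ℝ) ^ 2 / N :=
    lt_of_lt_of_le
      (abs_fillMarginals_sub_lt hJ1 hJ2 hclose (fun b c => abs_round_mul_div_sub_le hN' _) b c)
      (mul_add_sub_one_sq_mul_le hn hε hN')
  refine ⟨fillMarginals a π' R, fun b c => ?_, sum_fillMarginals_right, sum_fillMarginals_left,
    hbound, fun hmin b c => ?_⟩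
  · rw [← mem_zmultiples_inv_natCast_iff]
    exact fillMarginals_mem (fun b => mem_zmultiples_inv_natCast_iff.mpr (hdyad b))
      (fun b c => mem_zmultiples_inv_natCast_iff.mpr ⟨_, rfl⟩) b c
  · linarith [(abs_lt.mp (hbound b c)).1, hmin b c]

theorem stmt0 {A : Type*} [Fintype A] [DecidableEq A] [Nonempty A]
    (π π' : A → ℝ) (J : A → A → ℝ) (ε : ℝ) (N : ℕ) (a : A)
    (hπ0 : ∀ b, 0 ≤ π b) (hπ1 : ∑ b, π b = 1)
    (hπ'0 : ∀ b, 0 ≤ π' b) (hπ'1 : ∑ b, π' b = 1)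
    (hJ0 : ∀ b c, 0 ≤ J b c)
    (hJ1 : ∀ b, ∑ c, J b c = π b) (hJ2 : ∀ c, ∑ b, J b c = π c)
    (hεpos : 0 < ε) (hN : 0 < N)
    (hclose : ∀ b, |π' b - π b| < ε)
    (hdyad : ∀ b, ∃ k : ℤ, π' b = (k : ℝ) / N) :
    ∃ J' : A → A → ℝ,
      (∀ b c, ∃ k : ℤ, J' b c = (k : ℝ) / N) ∧
      (∀ b, ∑ c, J' b c = π' b) ∧
      (∀ c, ∑ b, J' b c = π' c) ∧
      (∀ b c, |J' b c - J b c| < 2 * (Fintype.card A : ℝ) * ε + (Fintype.card A : ℝ) ^ 2 / N) ∧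
      ((∀ b c, 2 * (Fintype.card A : ℝ) * ε + (Fintype.card A : ℝ) ^ 2 / N < J b c) →
        ∀ b c, 0 < J' b c) :=
  stmt0_general π π' J ε N a hJ1 hJ2 hN hclose hdyad
end

section
/- Let A be a finite set, N ≥ 2, φ : {1,…,N} → A, and let τ : {1,…,N−1} → {2,…,N} be a bijection. Define the graph Γ(τ) with vertex set {1,…,N} and edge set {(i, τ(i)) : 1 ≤ i ≤ N−1}. If Γ(τ) has more than |A|² connected components, then there exist indices 1 ≤ i < j ≤ N−1 lying in different connected components of Γ(τ) with φ(i) = φ(j) and φ(τ(i)) = φ(τ(j)); swapping the values of τ at i and j yields a bijection τ' : {1,…,N−1} → {2,…,N} with the same empirical pair distribution as τ and such that Γ(τ') has one fewer connected component than Γ(τ). -/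
/-!
The connected components of `lineGraph τ` are exactly the cycles of `τ`: the graph contains every
edge `x — τ x` except the one leaving the last vertex, and removing a single edge from a cycle
leaves it connected. Each cycle contains a vertex `v < N - 1` (the last vertex is reached from
such a `v`, because `τ` sends it to the first one), so with more than `|A|²` cycles two such
vertices `i`, `j` in different cycles carry the same pair `(φ v, φ (τ v))`. Right-multiplying by
the transposition `(i j)` exchanges `τ i` and `τ j`, which keeps every pair `(φ k, φ (τ k))`,
and it merges the two cycles through `i` and `j` into one.
-/

/-- The graph on `{1,…,N}` (encoded as `Fin N`) whose edges are the pairs `(i, τ i)`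
for `i ∈ {1,…,N−1}` (encoded as the indices with `i.val < N - 1`). -/
def lineGraph {N : ℕ} (τ : Equiv.Perm (Fin N)) : SimpleGraph (Fin N) :=
  SimpleGraph.fromRel (fun i j => i.val < N - 1 ∧ τ i = j)

open Equiv

theorem Equivalence.or_and_of_imp {α : Type*} {r : α → α → Prop} (hr : Equivalence r)
    {p : α → Prop} (hp : ∀ {x y}, r x y → p x → p y) :
    Equivalence fun x y => r x y ∨ p x ∧ p y where
  refl x := Or.inl (hr.refl x)
  symm := by
    rintro x y (hxy | ⟨hx, hy⟩)
    exacts [Or.inl (hr.symm hxy), Or.inr ⟨hy, hx⟩]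
  trans := by
    rintro x y z (hxy | ⟨hx, hy⟩) (hyz | ⟨hy', hz⟩)
    · exact Or.inl (hr.trans hxy hyz)
    · exact Or.inr ⟨hp (hr.symm hxy) hy', hz⟩
    · exact Or.inr ⟨hx, hp hyz hy⟩
    · exact Or.inr ⟨hx, hz⟩

/-- `r'` is `r` with the classes of `a` and `b` glued together. -/
theorem Quot.card_eq_card_sub_one_of_merge {α : Type*} {r r' : α → α → Prop} [Finite (Quot r)]
    (hr : Equivalence r) {a b : α} (hab : ¬r a b)
    (h : ∀ x y, r' x y ↔ r x y ∨ (r x a ∨ r x b) ∧ (r y a ∨ r y b)) :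
    Nat.card (Quot r') = Nat.card (Quot r) - 1 := by
  classical
  have hr' : Equivalence r' := by
    rw [show r' = _ from funext₂ fun x y => propext (h x y)]
    exact hr.or_and_of_imp fun hxy hx => hx.imp (hr.trans (hr.symm hxy)) (hr.trans (hr.symm hxy))
  let f (c : {c : Quot r // c ≠ Quot.mk r b}) : Quot r' :=
    Quot.factor r r' (fun x y hxy => (h x y).2 (Or.inl hxy)) c
  have hf : Function.Bijective f := by
    constructor
    · rintro ⟨⟨x⟩, hx⟩ ⟨⟨y⟩, hy⟩ hxy
      simp only [f, Quot.factor, hr'.quot_mk_eq_iff, h] at hxy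
      simp only [ne_eq, hr.quot_mk_eq_iff] at hx hy
      refine Subtype.ext (hr.quot_mk_eq_iff x y |>.2 ?_)
      rcases hxy with hxy | ⟨hx' | hx', hy' | hy'⟩
      exacts [hxy, hr.trans hx' (hr.symm hy'), (hy hy').elim, (hx hx').elim, (hx hx').elim]
    · rintro ⟨x⟩
      by_cases hxb : r x b
      · refine ⟨⟨Quot.mk r a, by rwa [ne_eq, hr.quot_mk_eq_iff]⟩, ?_⟩
        exact (hr'.quot_mk_eq_iff a x).2 <| (h a x).2 (Or.inr ⟨Or.inl (hr.refl a), Or.inr hxb⟩)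
      · exact ⟨⟨Quot.mk r x, by rwa [ne_eq, hr.quot_mk_eq_iff]⟩, rfl⟩
  rw [← Nat.card_eq_of_bijective f hf, ← Nat.card_congr (Equiv.optionSubtypeNe (Quot.mk r b)),
    Finite.card_option, Nat.add_sub_cancel]

namespace Equiv.Perm

variable {α : Type*} {σ : Perm α} {r : α → α → Prop}

theorem SameCycle.rel_of_forall_rel_apply (hr : Equivalence r) (h : ∀ x, r x (σ x))
    {x y : α} (hxy : σ.SameCycle x y) : r x y := by
  obtain ⟨k, rfl⟩ := hxy
  induction k using Int.induction_on with
  | zero => exact hr.refl x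
  | succ k ih =>
    rw [add_comm, zpow_add, zpow_one, mul_apply]
    exact hr.trans ih (h _)
  | pred k ih =>
    have hk : σ ^ (-(k : ℤ) - 1) = σ⁻¹ * σ ^ (-(k : ℤ)) := by
      rw [← zpow_neg_one, ← zpow_add, add_comm, sub_eq_add_neg]
    rw [hk, mul_apply]
    refine hr.trans ih (hr.symm ?_)
    simpa using h (σ⁻¹ ((σ ^ (-(k : ℤ))) x))

/-- A cycle with one edge removed is still connected. -/
theorem SameCycle.rel_of_forall_notMem_rel_apply [Finite α] (hr : Equivalence r) {s : Set α}
    (hs : ∀ b ∈ s, ∀ b' ∈ s, σ.SameCycle b b' → b = b') (h : ∀ x ∉ s, r x (σ x))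
    {x y : α} (hxy : σ.SameCycle x y) : r x y := by
  refine hxy.rel_of_forall_rel_apply hr fun b => ?_
  by_cases hb : b ∈ s
  swap
  · exact h b hb
  by_contra hbσ
  have orbit (n : ℕ) : r (σ b) ((σ ^ n) (σ b)) := by
    induction n with
    | zero => exact hr.refl _
    | succ n ih =>
      have hn : (σ ^ n) (σ b) ∉ s := fun hn => by
        rw [← hs b hb _ hn (sameCycle_pow_right.2 (sameCycle_apply_right.2 .rfl))] at ih
        exact hbσ (hr.symm ih)
      rw [pow_succ', mul_apply]
      exact hr.trans ih (h _ hn)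
  obtain ⟨n, -, hn⟩ := (sameCycle_apply_left.2 (SameCycle.refl σ b)).exists_pow_eq'
  have := orbit n
  rw [hn] at this
  exact hbσ (hr.symm this)

theorem sameCycle_mul_swap_iff [Finite α] [DecidableEq α] {i j : α} (hij : ¬σ.SameCycle i j)
    {x y : α} :
    (σ * swap i j).SameCycle x y ↔ σ.SameCycle x y ∨
      (σ.SameCycle x i ∨ σ.SameCycle x j) ∧ (σ.SameCycle y i ∨ σ.SameCycle y j) := by
  have apply_of_ne {z : α} (hi : z ≠ i) (hj : z ≠ j) : (σ * swap i j) z = σ z := by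
    rw [mul_apply, swap_apply_of_ne_of_ne hi hj]
  constructor
  · refine fun h => h.rel_of_forall_rel_apply ((SameCycle.equivalence σ).or_and_of_imp
      (p := fun z => σ.SameCycle z i ∨ σ.SameCycle z j) fun hzw hz =>
      hz.imp hzw.symm.trans hzw.symm.trans) fun z => ?_
    by_cases hi : z = i
    · rw [hi, mul_apply, swap_apply_left]
      exact Or.inr ⟨Or.inl .rfl, Or.inr (sameCycle_apply_left.2 .rfl)⟩
    by_cases hj : z = j
    · rw [hj, mul_apply, swap_apply_right]
      exact Or.inr ⟨Or.inr .rfl, Or.inl (sameCycle_apply_left.2 .rfl)⟩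
    · rw [apply_of_ne hi hj]
      exact Or.inl (sameCycle_apply_right.2 .rfl)
  · have coarser {u v : α} (huv : σ.SameCycle u v) : (σ * swap i j).SameCycle u v := by
      refine huv.rel_of_forall_notMem_rel_apply (SameCycle.equivalence _) (s := {i, j}) ?_ ?_
      · rintro b (rfl | rfl) b' (rfl | rfl) hbb'
        exacts [rfl, (hij hbb').elim, (hij hbb'.symm).elim, rfl]
      · intro z hz
        simp only [Set.mem_insert_iff, Set.mem_singleton_iff, not_or] at hz
        rw [← apply_of_ne hz.1 hz.2]
        exact sameCycle_apply_right.2 .rfl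
    have hij' : (σ * swap i j).SameCycle i j := by
      have : (σ * swap i j).SameCycle i (σ j) := by
        simpa using (sameCycle_apply_right (f := σ * swap i j) (x := i) (y := i)).2 .rfl
      exact this.trans (coarser (sameCycle_apply_left.2 .rfl))
    have to_i {z : α} (hz : σ.SameCycle z i ∨ σ.SameCycle z j) : (σ * swap i j).SameCycle z i :=
      hz.elim coarser fun hzj => (coarser hzj).trans hij'.symm
    rintro (h | ⟨hx, hy⟩)
    exacts [coarser h, (to_i hx).trans (to_i hy).symm]

theorem apply_mul_swap_eq_apply {β : Type*} [DecidableEq α] (f : α → β) {i j : α}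
    (h : f (σ i) = f (σ j)) (x : α) : f ((σ * swap i j) x) = f (σ x) := by
  rw [mul_apply, swap_apply_def]
  split_ifs with hi hj
  · rw [hi, h]
  · rw [hj, h]
  · rfl

theorem apply_mul_swap_iff {p q : α → Prop} [DecidableEq α] (h : ∀ x, p (σ x) ↔ q x) {i j : α}
    (hi : ¬q i) (hj : ¬q j) (x : α) : p ((σ * swap i j) x) ↔ q x := by
  rw [mul_apply, h, swap_apply_def]
  split_ifs with hxi hxj
  · rw [hxi]; exact iff_of_false hj hi
  · rw [hxj]; exact iff_of_false hi hj
  · rfl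

end Equiv.Perm

open Equiv.Perm

theorem lineGraph_reachable_iff {N : ℕ} (τ : Perm (Fin N)) {u v : Fin N} :
    (lineGraph τ).Reachable u v ↔ τ.SameCycle u v := by
  constructor
  · intro h
    rw [SimpleGraph.reachable_iff_reflTransGen] at h
    refine Relation.reflTransGen_le_of_equivalence_of_le (SameCycle.equivalence τ) ?_ _ _ h
    intro x y hxy
    rcases ((SimpleGraph.fromRel_adj ..).1 hxy).2 with ⟨-, rfl⟩ | ⟨-, rfl⟩
    exacts [sameCycle_apply_right.2 .rfl, sameCycle_apply_left.2 .rfl]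
  · refine fun h => h.rel_of_forall_notMem_rel_apply (SimpleGraph.reachable_is_equivalence _)
      (s := {x | N - 1 ≤ x.val}) ?_ ?_
    · intro b hb b' hb' _
      simp only [Set.mem_ofPred_eq] at hb hb'
      omega
    · intro x hx
      simp only [Set.mem_ofPred_eq, not_le] at hx
      by_cases hfix : τ x = x
      · rw [hfix]
      · exact SimpleGraph.Adj.reachable
          ((SimpleGraph.fromRel_adj ..).2 ⟨Ne.symm hfix, Or.inl ⟨hx, rfl⟩⟩)

theorem lineGraph_connectedComponentMk_eq_iff {N : ℕ} (τ : Perm (Fin N)) {u v : Fin N} :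
    (lineGraph τ).connectedComponentMk u = (lineGraph τ).connectedComponentMk v ↔
      τ.SameCycle u v := by
  rw [SimpleGraph.ConnectedComponent.eq, lineGraph_reachable_iff]

theorem card_connectedComponent_lineGraph_mul_swap {N : ℕ} {τ : Perm (Fin N)} {i j : Fin N}
    (hij : ¬τ.SameCycle i j) :
    Nat.card (lineGraph (τ * swap i j)).ConnectedComponent =
      Nat.card (lineGraph τ).ConnectedComponent - 1 :=
  Quot.card_eq_card_sub_one_of_merge (SimpleGraph.reachable_is_equivalence _)
    (by rwa [lineGraph_reachable_iff]) fun x y => by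
      simp only [lineGraph_reachable_iff, sameCycle_mul_swap_iff hij]

theorem exists_lt_connectedComponentMk_eq {N : ℕ} (hN : 2 ≤ N) {τ : Perm (Fin N)}
    (hτ : ∀ i, (τ i).val = 0 ↔ i.val = N - 1) (c : (lineGraph τ).ConnectedComponent) :
    ∃ v : Fin N, v.val < N - 1 ∧ (lineGraph τ).connectedComponentMk v = c := by
  obtain ⟨v, rfl⟩ := c.exists_rep
  by_cases hv : v.val < N - 1
  · exact ⟨v, hv, rfl⟩
  refine ⟨τ.symm v, ?_, (lineGraph_connectedComponentMk_eq_iff τ).2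
    (sameCycle_symm_apply_left.2 .rfl)⟩
  have := hτ (τ.symm v)
  rw [apply_symm_apply] at this
  omega

theorem exists_pair_eq_of_card_lt {A : Type*} [Finite A] {N : ℕ} (hN : 2 ≤ N) (φ : Fin N → A)
    {τ : Perm (Fin N)} (hτ : ∀ i, (τ i).val = 0 ↔ i.val = N - 1)
    (hcomp : Nat.card A ^ 2 < Nat.card (lineGraph τ).ConnectedComponent) :
    ∃ i j : Fin N, i.val < j.val ∧ j.val < N - 1 ∧
      (lineGraph τ).connectedComponentMk i ≠ (lineGraph τ).connectedComponentMk j ∧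
      φ i = φ j ∧ φ (τ i) = φ (τ j) := by
  choose rep hrep_lt hrep using exists_lt_connectedComponentMk_eq hN hτ
  obtain ⟨c, d, hcd_pair, hcd⟩ : ∃ c d, (φ (rep c), φ (τ (rep c))) = (φ (rep d), φ (τ (rep d)))
      ∧ c ≠ d := by
    refine Function.not_injective_iff.1 fun hinj => hcomp.not_ge ?_
    simpa [sq] using Nat.card_le_card_of_injective _ hinj
  simp only [Prod.mk.injEq] at hcd_pair
  have hne : (lineGraph τ).connectedComponentMk (rep c) ≠
      (lineGraph τ).connectedComponentMk (rep d) := by rwa [hrep, hrep]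
  rcases lt_or_gt_of_ne (Fin.val_ne_of_ne (ne_of_apply_ne _ hne)) with hlt | hlt
  · exact ⟨rep c, rep d, hlt, hrep_lt d, hne, hcd_pair⟩
  · exact ⟨rep d, rep c, hlt, hrep_lt c, hne.symm, hcd_pair.1.symm, hcd_pair.2.symm⟩

theorem stmt2 {A : Type*} [Fintype A] [DecidableEq A]
    (N : ℕ) (hN : 2 ≤ N) (φ : Fin N → A) (τ : Equiv.Perm (Fin N))
    (hτ : ∀ i, (τ i).val = 0 ↔ i.val = N - 1)
    (hcomp : (Fintype.card A) ^ 2 < Nat.card (lineGraph τ).ConnectedComponent) :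
    ∃ i j : Fin N, i.val < j.val ∧ j.val < N - 1 ∧
      (lineGraph τ).connectedComponentMk i ≠ (lineGraph τ).connectedComponentMk j ∧
      φ i = φ j ∧ φ (τ i) = φ (τ j) ∧
      (∀ i', ((τ * Equiv.swap i j) i').val = 0 ↔ i'.val = N - 1) ∧
      (∀ a b,
        (Finset.univ.filter
          (fun k : Fin N => k.val < N - 1 ∧ φ k = a ∧ φ ((τ * Equiv.swap i j) k) = b)).card
        = (Finset.univ.filter
          (fun k : Fin N => k.val < N - 1 ∧ φ k = a ∧ φ (τ k) = b)).card) ∧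
      Nat.card (lineGraph (τ * Equiv.swap i j)).ConnectedComponent
        = Nat.card (lineGraph τ).ConnectedComponent - 1 := by
  obtain ⟨i, j, hij, hj, hne, hφ, hφτ⟩ :=
    exists_pair_eq_of_card_lt hN φ hτ (by rwa [Nat.card_eq_fintype_card])
  have hi : i.val < N - 1 := hij.trans hj
  have hτ' := apply_mul_swap_iff (p := fun k : Fin N => k.val = 0)
    (q := fun k : Fin N => k.val = N - 1) hτ hi.ne hj.ne
  have hcard := card_connectedComponent_lineGraph_mul_swap
    ((lineGraph_connectedComponentMk_eq_iff τ).not.1 hne)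
  refine ⟨i, j, hij, hj, hne, hφ, hφτ, hτ', fun a b => ?_, hcard⟩
  simp only [apply_mul_swap_eq_apply φ hφτ]
end

section
/- Let A be a finite set, N ≥ 2, φ : {1,…,N} → A, and τ : {1,…,N−1} → {2,…,N} a bijection such that the graph Γ(τ) on vertices {1,…,N} with edges {(i,τ(i))} has k ≤ |A|² connected components. Then there exists a bijection σ : {1,…,N−1} → {2,…,N} such that Γ(σ) is connected, and the empirical distributions J_σ and J_τ of the maps i ↦ (φ(i),φ(σ(i))) and i ↦ (φ(i),φ(τ(i))) satisfy ‖J_σ − J_τ‖_∞ ≤ |A|²/N. -/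
/-!
Fixed points counted as cycles, every component of `Γ(τ)` is a union of cycles of `τ`, so `τ` has
`k ≤ |A|²` cycles. Composing `τ` with the transposition of two indices `< N - 1` lying on different
cycles merges these two cycles, keeps `N - 1 ↦ 0`, and changes each count
`#{i | (φ i, φ (τ i)) = (a, b)}` by at most one. After at most `k - 1` such merges we reach a
single cycle `σ`, whose graph is connected, and `‖J_σ - J_τ‖_∞ ≤ (k - 1)/(N - 1) ≤ k/N`.
-/

open Equiv Finset

namespace Equiv.Perm

variable {α : Type*} {ρ σ : Perm α}

/-- The number of cycles of `ρ`, fixed points included. -/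
noncomputable def numCycles (ρ : Perm α) : ℕ := Nat.card (Quotient (SameCycle.setoid ρ))

theorem numCycles_le_card [Finite α] (ρ : Perm α) : numCycles ρ ≤ Nat.card α :=
  Nat.card_le_card_of_surjective _ Quotient.mk_surjective

theorem numCycles_pos [Finite α] [Nonempty α] (ρ : Perm α) : 0 < numCycles ρ :=
  have : Nonempty (Quotient (SameCycle.setoid ρ)) := ⟨Quotient.mk _ (Classical.arbitrary α)⟩
  Nat.card_pos

theorem numCycles_lt_of_sameCycle_imp [Finite α] (hle : ∀ u v, ρ.SameCycle u v → σ.SameCycle u v)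
    {x y : α} (hσ : σ.SameCycle x y) (hρ : ¬ρ.SameCycle x y) : numCycles σ < numCycles ρ := by
  have := Fintype.ofFinite α
  have := Fintype.ofFinite (Quotient (SameCycle.setoid ρ))
  have := Fintype.ofFinite (Quotient (SameCycle.setoid σ))
  simp only [numCycles, Nat.card_eq_fintype_card]
  refine Fintype.card_lt_of_surjective_not_injective (Quotient.map' id hle)
    (Quotient.ind fun a => ⟨Quotient.mk _ a, rfl⟩)
    fun hinj => hρ (Quotient.exact (hinj (Quotient.sound hσ)))

theorem SameCycle.of_forall_sameCycle_apply [Finite α] (h : ∀ z, σ.SameCycle z (ρ z)) {u v : α}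
    (huv : ρ.SameCycle u v) : σ.SameCycle u v := by
  obtain ⟨n, -, rfl⟩ := huv.exists_pow_eq'
  clear huv
  induction n with
  | zero => exact .refl _ _
  | succ n ih => rw [pow_succ', mul_apply]; exact ih.trans (h _)

/-- Walking along `ρ` from `ρ r` runs through the whole cycle before reaching `r`, the only
point of the cycle where `σ` may differ from `ρ`. -/
theorem sameCycle_apply_of_agree_except [Finite α] {r : α}
    (h : ∀ z, ρ.SameCycle r z → z ≠ r → σ z = ρ z) {z : α} (hz : ρ.SameCycle r z) :
    σ.SameCycle (ρ r) z := by
  obtain ⟨n, -, rfl⟩ := (sameCycle_apply_left.2 hz).exists_pow_eq'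
  clear hz
  induction n with
  | zero => exact .refl _ _
  | succ n ih =>
    rw [pow_succ', mul_apply]
    by_cases hy : (ρ ^ n) (ρ r) = r
    · rw [hy]
    · rw [← h _ (by simpa using SameCycle.refl ρ r) hy]
      exact ih.trans (sameCycle_apply_right.2 (.refl _ _))

variable [DecidableEq α] [Finite α] {x y : α}

theorem sameCycle_mul_swap_apply_right (hxy : ¬ρ.SameCycle x y) :
    (ρ * swap x y).SameCycle (ρ y) y :=
  sameCycle_apply_of_agree_except (fun _ hz hzy => by
    rw [mul_apply, swap_apply_of_ne_of_ne (fun hzx => hxy (hzx ▸ hz).symm) hzy]) (.refl _ _)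

theorem sameCycle_mul_swap (hxy : ¬ρ.SameCycle x y) : (ρ * swap x y).SameCycle x y := by
  refine sameCycle_apply_left.1 ?_
  rw [mul_apply, swap_apply_left]
  exact sameCycle_mul_swap_apply_right hxy

theorem SameCycle.mul_swap (hxy : ¬ρ.SameCycle x y) {u v : α} (huv : ρ.SameCycle u v) :
    (ρ * swap x y).SameCycle u v := by
  refine huv.of_forall_sameCycle_apply fun z => ?_
  rcases eq_or_ne z x with rfl | hzx
  · rw [swap_comm]
    exact (sameCycle_mul_swap_apply_right fun h => hxy h.symm).symm
  rcases eq_or_ne z y with rfl | hzy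
  · exact (sameCycle_mul_swap_apply_right hxy).symm
  · have hz : (ρ * swap x y) z = ρ z := by rw [mul_apply, swap_apply_of_ne_of_ne hzx hzy]
    rw [← hz]
    exact sameCycle_apply_right.2 (.refl _ _)

theorem numCycles_mul_swap_lt (hxy : ¬ρ.SameCycle x y) : numCycles (ρ * swap x y) < numCycles ρ :=
  numCycles_lt_of_sameCycle_imp (fun _ _ => SameCycle.mul_swap hxy) (sameCycle_mul_swap hxy) hxy

end Equiv.Perm

open Equiv.Perm

/-- The difference of the two counts is `([P x] - [P y]) * ([Q (f y)] - [Q (f x)])`. -/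
theorem abs_card_filter_comp_swap_sub_le {α β : Type*} [Fintype α] [DecidableEq α]
    (P : α → Prop) (Q : β → Prop) [DecidablePred P] [DecidablePred Q] (f : α → β) (x y : α) :
    |(#{k | P k ∧ Q (f (swap x y k))} : ℤ) - #{k | P k ∧ Q (f k)}| ≤ 1 := by
  rcases eq_or_ne x y with rfl | hxy
  · simp
  rw [card_filter, card_filter]
  push_cast
  rw [← sum_sub_distrib, Fintype.sum_eq_add x y hxy fun z hz => by
    rw [swap_apply_of_ne_of_ne hz.1 hz.2, sub_self]]
  simp only [swap_apply_left, swap_apply_right]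
  by_cases P x <;> by_cases P y <;> by_cases Q (f x) <;> by_cases Q (f y) <;> simp [*]

section LineGraph

variable {N : ℕ}

def MapsLastToZero (ρ : Perm (Fin N)) : Prop := ∀ i, (ρ i).val = 0 ↔ i.val = N - 1

/-- `(N - 1)` times the empirical distribution of `i ↦ (φ i, φ (ρ i))` at `(a, b)`. -/
def pairCount {A : Type*} [DecidableEq A] (φ : Fin N → A) (ρ : Perm (Fin N)) (a b : A) : ℕ :=
  #{k | k.val < N - 1 ∧ φ k = a ∧ φ (ρ k) = b}

theorem MapsLastToZero.mul_swap {ρ : Perm (Fin N)} (hρ : MapsLastToZero ρ) {x y : Fin N}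
    (hx : x.val < N - 1) (hy : y.val < N - 1) : MapsLastToZero (ρ * swap x y) := by
  intro i
  rw [mul_apply, hρ, swap_apply_def]
  split_ifs with hix hiy <;> subst_vars <;> omega

theorem MapsLastToZero.exists_sameCycle_val_lt (hN : 2 ≤ N) {ρ : Perm (Fin N)}
    (hρ : MapsLastToZero ρ) (u : Fin N) : ∃ v, ρ.SameCycle u v ∧ v.val < N - 1 := by
  by_cases hu : u.val < N - 1
  · exact ⟨u, .refl _ _, hu⟩
  · exact ⟨ρ u, sameCycle_apply_right.2 (.refl _ _), by rw [(hρ u).2 (by omega)]; omega⟩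

theorem abs_pairCount_mul_swap_sub_le {A : Type*} [DecidableEq A] (φ : Fin N → A)
    (ρ : Perm (Fin N)) (x y : Fin N) (a b : A) :
    |(pairCount φ (ρ * swap x y) a b : ℤ) - pairCount φ ρ a b| ≤ 1 := by
  simpa only [pairCount, and_assoc, mul_apply] using
    abs_card_filter_comp_swap_sub_le (fun k : Fin N => k.val < N - 1 ∧ φ k = a) (φ · = b) ρ x y

theorem sameCycle_of_reachable_lineGraph {τ : Perm (Fin N)} {u v : Fin N}
    (h : (lineGraph τ).Reachable u v) : τ.SameCycle u v := by
  obtain ⟨w⟩ := h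
  induction w with
  | nil => exact .refl _ _
  | cons hadj _ ih =>
    obtain ⟨-, ⟨-, rfl⟩ | ⟨-, rfl⟩⟩ := (SimpleGraph.fromRel_adj _ _ _).1 hadj
    · exact sameCycle_apply_left.1 ih
    · exact sameCycle_apply_left.2 ih

theorem numCycles_le_card_connectedComponent (τ : Perm (Fin N)) :
    numCycles τ ≤ Nat.card (lineGraph τ).ConnectedComponent :=
  Nat.card_le_card_of_surjective
    (SimpleGraph.ConnectedComponent.lift (Quotient.mk (SameCycle.setoid τ))
      fun _ _ p _ => Quotient.sound (sameCycle_of_reachable_lineGraph ⟨p⟩))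
    (Quotient.ind fun u => ⟨(lineGraph τ).connectedComponentMk u, rfl⟩)

theorem reachable_lineGraph_apply (σ : Perm (Fin N)) {i : Fin N} (hi : i.val < N - 1) :
    (lineGraph σ).Reachable i (σ i) := by
  by_cases hfix : σ i = i
  · rw [hfix]
  · exact ((SimpleGraph.fromRel_adj _ _ _).2 ⟨Ne.symm hfix, .inl ⟨hi, rfl⟩⟩).reachable

/-- The edges `(i, σ i)` follow the single cycle of `σ` starting from `σ (N - 1)`; the one
missing edge `(N - 1, σ (N - 1))` only leads back to the start. -/
theorem lineGraph_connected_of_sameCycle (hN : 0 < N) {σ : Perm (Fin N)}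
    (h : ∀ u v, σ.SameCycle u v) : (lineGraph σ).Connected := by
  set start := σ ⟨N - 1, by omega⟩
  have hreach : ∀ n : ℕ, (lineGraph σ).Reachable start ((σ ^ n) start) := by
    intro n
    induction n with
    | zero => rfl
    | succ n ih =>
      rw [pow_succ', mul_apply]
      by_cases hlast : ((σ ^ n) start).val < N - 1
      · exact ih.trans (reachable_lineGraph_apply σ hlast)
      · rw [show (σ ^ n) start = ⟨N - 1, by omega⟩ from Fin.ext (by dsimp only; omega)]
  have hfrom : ∀ v, (lineGraph σ).Reachable start v := fun v => by
    obtain ⟨n, -, rfl⟩ := (h start v).exists_pow_eq'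
    exact hreach n
  exact (SimpleGraph.connected_iff _).2 ⟨fun u v => (hfrom u).symm.trans (hfrom v), ⟨start⟩⟩

theorem exists_forall_sameCycle_abs_pairCount_sub_le (hN : 2 ≤ N) {A : Type*} [DecidableEq A]
    (φ : Fin N → A) (τ : Perm (Fin N)) (hτ : MapsLastToZero τ) :
    ∃ σ : Perm (Fin N), MapsLastToZero σ ∧ (∀ u v, σ.SameCycle u v) ∧
      ∀ a b, |(pairCount φ σ a b : ℤ) - pairCount φ τ a b| ≤ numCycles τ - 1 := by
  induction hk : numCycles τ using Nat.strong_induction_on generalizing τ with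
  | _ k ih =>
    have : Nonempty (Fin N) := ⟨⟨0, by omega⟩⟩
    by_cases hone : ∀ u v, τ.SameCycle u v
    · refine ⟨τ, hτ, hone, fun a b => ?_⟩
      have := numCycles_pos τ
      rw [sub_self, abs_zero]
      omega
    obtain ⟨u, v, huv⟩ : ∃ u v, ¬τ.SameCycle u v := by simpa only [not_forall] using hone
    obtain ⟨x, hux, hx⟩ := hτ.exists_sameCycle_val_lt hN u
    obtain ⟨y, hvy, hy⟩ := hτ.exists_sameCycle_val_lt hN v
    have hxy : ¬τ.SameCycle x y := fun hxy => huv (hux.trans (hxy.trans hvy.symm))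
    have hlt := numCycles_mul_swap_lt hxy
    obtain ⟨σ, hσ, hσone, hσcount⟩ := ih _ (hk ▸ hlt) _ (hτ.mul_swap hx hy) rfl
    refine ⟨σ, hσ, hσone, fun a b => ?_⟩
    have hswap := abs_pairCount_mul_swap_sub_le φ τ x y a b
    have htri := abs_sub_le (pairCount φ σ a b : ℤ) (pairCount φ (τ * swap x y) a b)
      (pairCount φ τ a b)
    have hσab := hσcount a b
    omega

end LineGraph

theorem stmt3 {A : Type*} [Fintype A] [DecidableEq A]
    (N : ℕ) (hN : 2 ≤ N) (φ : Fin N → A) (τ : Equiv.Perm (Fin N))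
    (hτ : ∀ i, (τ i).val = 0 ↔ i.val = N - 1)
    (hcomp : Nat.card (lineGraph τ).ConnectedComponent ≤ (Fintype.card A) ^ 2) :
    ∃ σ : Equiv.Perm (Fin N),
      (∀ i, (σ i).val = 0 ↔ i.val = N - 1) ∧
      (lineGraph σ).Connected ∧
      ∀ a b,
        |((Finset.univ.filter
            (fun k : Fin N => k.val < N - 1 ∧ φ k = a ∧ φ (σ k) = b)).card : ℝ) / ((N : ℝ) - 1)
         - ((Finset.univ.filter
            (fun k : Fin N => k.val < N - 1 ∧ φ k = a ∧ φ (τ k) = b)).card : ℝ) / ((N : ℝ) - 1)|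
        ≤ (Fintype.card A : ℝ) ^ 2 / N := by
  obtain ⟨σ, hσ, hσone, hcount⟩ := exists_forall_sameCycle_abs_pairCount_sub_le hN φ τ hτ
  refine ⟨σ, hσ, lineGraph_connected_of_sameCycle (by omega) hσone, fun a b => ?_⟩
  have hkN : (numCycles τ : ℝ) ≤ N := by
    exact_mod_cast (numCycles_le_card τ).trans_eq (Nat.card_fin N)
  have hkA : (numCycles τ : ℝ) ≤ Fintype.card A ^ 2 := by
    exact_mod_cast (numCycles_le_card_connectedComponent τ).trans hcomp
  have hdiff : |(pairCount φ σ a b : ℝ) - pairCount φ τ a b| ≤ numCycles τ - 1 := by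
    exact_mod_cast hcount a b
  have hN1 : (1 : ℝ) < N := by exact_mod_cast hN
  calc |(pairCount φ σ a b : ℝ) / (N - 1) - pairCount φ τ a b / (N - 1)|
      = |(pairCount φ σ a b : ℝ) - pairCount φ τ a b| / (N - 1) := by
        rw [← sub_div, abs_div, abs_of_pos (a := (N : ℝ) - 1) (by linarith)]
    _ ≤ (numCycles τ - 1) / (N - 1) := by gcongr
    _ ≤ numCycles τ / N := by rw [div_le_div_iff₀ (by linarith) (by linarith)]; nlinarith
    _ ≤ Fintype.card A ^ 2 / N := by gcongr
end

section
/- Let A be a finite set and let π, π' be probability distributions on A with π' taking values in (1/N)ℤ for a positive integer N. Suppose J' is a function A×A → [0,1] taking values in (1/N)ℤ with both marginals equal to π'. Then there exist partitions {P_{a,b}} and {Q_{a,b}} of {1,…,N} indexed by A×A, and a map φ : {1,…,N} → A with empirical distribution π', such that |P_{a,b}| = |Q_{a,b}| = N·J'(a,b), P_{a,b} ⊆ φ⁻¹(a), and Q_{a,b} ⊆ φ⁻¹(b) for all a,b ∈ A. -/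
/-!
Scaling by `N` turns `J'` into a table of natural numbers `m a b` summing to `N`, whose row and
column sums are both `N π'`. Colour `{1,…,N}` by `A × A` with colour classes of sizes `m a b`; these
classes are the `P a b`, and `φ` is the first coordinate of the colour. Each fibre `φ⁻¹(b)` then has
`∑ c, m b c = ∑ a, m a b` elements, so it can in turn be coloured by `A` with classes of sizes
`m a b`; these are the `Q a b`.
-/
open Finset

theorem exists_card_fiber_eq {α β : Type*} [Fintype α] [Fintype β] [DecidableEq β]
    (n : β → ℕ) (h : ∑ b, n b = Fintype.card α) :
    ∃ f : α → β, ∀ b, #{i | f i = b} = n b := by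
  obtain e : α ≃ Σ b, Fin (n b) := Fintype.equivOfCardEq (by simp [h])
  refine ⟨fun i => (e i).1, fun b => ?_⟩
  rw [← Fintype.card_subtype, ← Fintype.card_fin (n b)]
  exact Fintype.card_congr ((e.subtypeEquiv fun _ => Iff.rfl).trans (Equiv.sigmaSubtype b))

theorem exists_card_fiber_prod_eq {α β γ : Type*} [Fintype α] [Fintype γ] [DecidableEq β]
    [DecidableEq γ] (p : α → β) (n : γ → β → ℕ) (h : ∀ b, ∑ c, n c b = #{i | p i = b}) :
    ∃ f : α → γ, ∀ c b, #{i | f i = c ∧ p i = b} = n c b := by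
  choose g hg using fun b => exists_card_fiber_eq (α := {i // p i = b}) (n · b)
    (by rw [h b, Fintype.card_subtype])
  refine ⟨fun i => g (p i) ⟨i, rfl⟩, fun c b => ?_⟩
  rw [← hg b c]
  refine (card_bij (fun x _ => x.1) ?_ (fun _ _ _ _ => Subtype.ext) ?_).symm
  · rintro ⟨i, rfl⟩ hi
    simpa using hi
  · rintro i hi
    obtain ⟨hc, rfl⟩ : g (p i) ⟨i, rfl⟩ = c ∧ p i = b := by simpa using hi
    exact ⟨⟨i, rfl⟩, by simpa using hc, rfl⟩

theorem card_filter_fst_eq_sum {α β γ : Type*} [Fintype α] [Fintype γ] [DecidableEq β]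
    [DecidableEq γ] (g : α → β × γ) (a : β) :
    #{i | (g i).1 = a} = ∑ c, #{i | g i = (a, c)} := by
  rw [card_eq_sum_card_fiberwise (f := fun i => (g i).2) (t := univ)
    (fun _ _ => mem_coe.2 (mem_univ _))]
  simp only [filter_filter, Prod.ext_iff]

theorem exists_natCast_eq_mul_of_eq_intCast_div {N : ℕ} (hN : N ≠ 0) {x : ℝ} (hx : 0 ≤ x)
    (hxN : ∃ k : ℤ, x = k / N) : ∃ m : ℕ, (m : ℝ) = N * x := by
  obtain ⟨k, rfl⟩ := hxN
  have hNk : (N : ℝ) * (k / N) = k := mul_div_cancel₀ _ (Nat.cast_ne_zero.2 hN)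
  have hk : (0 : ℝ) ≤ k := hNk ▸ mul_nonneg (Nat.cast_nonneg N) hx
  exact ⟨k.toNat, by rw [hNk]; exact_mod_cast Int.toNat_of_nonneg (by exact_mod_cast hk)⟩

theorem stmt8_general {A : Type*} [Fintype A] [DecidableEq A]
    (N : ℕ) (hN : 0 < N)
    (π' : A → ℝ) (J' : A → A → ℝ)
    (hπ'1 : ∑ a, π' a = 1)
    (hJ'range : ∀ a b, 0 ≤ J' a b ∧ J' a b ≤ 1)
    (hJ'dyad : ∀ a b, ∃ k : ℤ, J' a b = (k : ℝ) / N)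
    (hJ'1 : ∀ a, ∑ b, J' a b = π' a) (hJ'2 : ∀ b, ∑ a, J' a b = π' b) :
    ∃ (φ : Fin N → A) (P Q : A → A → Finset (Fin N)),
      (∀ a, π' a = ((Finset.univ.filter (fun i => φ i = a)).card : ℝ) / N) ∧
      (∀ i : Fin N, ∃! ab : A × A, i ∈ P ab.1 ab.2) ∧
      (∀ i : Fin N, ∃! ab : A × A, i ∈ Q ab.1 ab.2) ∧
      (∀ a b, ((P a b).card : ℝ) = N * J' a b) ∧
      (∀ a b, ((Q a b).card : ℝ) = N * J' a b) ∧
      (∀ a b, ∀ i ∈ P a b, φ i = a) ∧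
      (∀ a b, ∀ i ∈ Q a b, φ i = b) := by
  choose m hm using fun a b =>
    exists_natCast_eq_mul_of_eq_intCast_div hN.ne' (hJ'range a b).1 (hJ'dyad a b)
  have hrow : ∀ a, ((∑ b, m a b : ℕ) : ℝ) = N * π' a := fun a => by
    simp only [Nat.cast_sum, hm, ← mul_sum, hJ'1]
  have hcol : ∀ b, ((∑ a, m a b : ℕ) : ℝ) = N * π' b := fun b => by
    simp only [Nat.cast_sum, hm, ← mul_sum, hJ'2]
  have htotal : ∑ ab : A × A, m ab.1 ab.2 = Fintype.card (Fin N) := by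
    rw [Fintype.card_fin, ← univ_product_univ, sum_product, ← Nat.cast_inj (R := ℝ), Nat.cast_sum]
    simp only [hrow, ← mul_sum, hπ'1, mul_one]
  obtain ⟨g, hg⟩ := exists_card_fiber_eq (fun ab : A × A => m ab.1 ab.2) htotal
  set φ : Fin N → A := fun i => (g i).1
  have hφ : ∀ a, (#{i | φ i = a} : ℝ) = N * π' a := fun a => by
    simp only [φ, card_filter_fst_eq_sum, hg, hrow]
  obtain ⟨h, hh⟩ := exists_card_fiber_prod_eq φ m fun b => by
    exact_mod_cast (hcol b).trans (hφ b).symm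
  refine ⟨φ, fun a b => {i | g i = (a, b)}, fun a b => {i | h i = a ∧ φ i = b},
    fun a => ?_, fun i => ⟨g i, by simp⟩, fun i => ⟨(h i, φ i), by simp [Prod.ext_iff]⟩,
    fun a b => by simp only [hg, hm], fun a b => by simp only [hh, hm],
    fun a b i hi => congrArg Prod.fst (mem_filter.1 hi).2,
    fun a b i hi => (mem_filter.1 hi).2.2⟩
  rw [hφ, mul_div_cancel_left₀ _ (Nat.cast_ne_zero.2 hN.ne')]

theorem stmt8 {A : Type*} [Fintype A] [DecidableEq A]
    (N : ℕ) (hN : 0 < N)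
    (π' : A → ℝ) (J' : A → A → ℝ)
    (hπ'0 : ∀ a, 0 ≤ π' a) (hπ'1 : ∑ a, π' a = 1)
    (hπ'dyad : ∀ a, ∃ k : ℤ, π' a = (k : ℝ) / N)
    (hJ'range : ∀ a b, 0 ≤ J' a b ∧ J' a b ≤ 1)
    (hJ'dyad : ∀ a b, ∃ k : ℤ, J' a b = (k : ℝ) / N)
    (hJ'1 : ∀ a, ∑ b, J' a b = π' a) (hJ'2 : ∀ b, ∑ a, J' a b = π' b) :
    ∃ (φ : Fin N → A) (P Q : A → A → Finset (Fin N)),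
      (∀ a, π' a = ((Finset.univ.filter (fun i => φ i = a)).card : ℝ) / N) ∧
      (∀ i : Fin N, ∃! ab : A × A, i ∈ P ab.1 ab.2) ∧
      (∀ i : Fin N, ∃! ab : A × A, i ∈ Q ab.1 ab.2) ∧
      (∀ a b, ((P a b).card : ℝ) = N * J' a b) ∧
      (∀ a b, ((Q a b).card : ℝ) = N * J' a b) ∧
      (∀ a b, ∀ i ∈ P a b, φ i = a) ∧
      (∀ a b, ∀ i ∈ Q a b, φ i = b) :=
  stmt8_general N hN π' J' hπ'1 hJ'range hJ'dyad hJ'1 hJ'2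
end

section
/- Let G be a group with finite symmetric generating set S, F = B(e,r) the ball of radius r in the word metric, and v, w actions of G on (X,μ). Let P be a finite partition, P' = ⋁_{g∈F} gP (common refinement under v), and β : Σ(P') → Σ(Q') a Boolean-algebra isomorphism onto the algebra generated by a partition Q' such that |μ(P₁ ∩ v_s P₂) − μ(β(P₁) ∩ w_s β(P₂))| < ε|P'|⁻²|F|⁻¹/4 for all P₁,P₂ ∈ P' and s ∈ S. Then for every P ∈ P and every g ∈ F, μ(β(v_g P) △ w_g β(P)) ≤ ε|g|/(2|F|), where |g| is the word length of g. -/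
/-!
Write `U_g = β(v_g P_i)`. For `g = s g'` with `s ∈ S`, the sets `v_g P_i` and `v_s (v_{g'} P_i)`
coincide, and `μ(A △ v_s B)` for unions `A`, `B` of atoms of `P'` is a sum of at most `|P'|²` of the
numbers `μ(P₁ ∩ v_s P₂)`, which `β` matches with `μ(β P₁ ∩ w_s β P₂)` up to the given error. Hence
`μ(U_g △ w_s U_{g'}) ≤ ε/(2|F|)`. Choosing `s` with `|g'| = |g| - 1`, the triangle inequality for
`d(A, B) = μ(A △ B)` and the `w`-invariance of `μ` give
`d(U_g, w_g U_1) ≤ d(U_g, w_s U_{g'}) + d(U_{g'}, w_{g'} U_1)`, and induction on `|g|` concludes.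
-/

/-- The word length of `g` with respect to the generating set `S`. -/
noncomputable def wordLength {G : Type*} [Group G] (S : Set G) (g : G) : ℕ :=
  sInf {n | ∃ l : List G, l.length = n ∧ (∀ x ∈ l, x ∈ S) ∧ l.prod = g}

open MeasureTheory Set Function
open scoped symmDiff

structure IsMeasurablePartition {X ι : Type*} [MeasurableSpace X] (A : ι → Set X) : Prop where
  measurableSet : ∀ i, MeasurableSet (A i)
  pairwise_disjoint : Pairwise (Disjoint on A)
  iUnion_eq_univ : ⋃ i, A i = univ

namespace IsMeasurablePartition

variable {X Y ι κ : Type*} [MeasurableSpace X] [MeasurableSpace Y] {A A' : ι → Set X}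
  {B B' : κ → Set X}

lemma exists_mem (hA : IsMeasurablePartition A) (x : X) : ∃ i, x ∈ A i :=
  mem_iUnion.1 (hA.iUnion_eq_univ ▸ mem_univ x)

lemma mem_iff_eq (hA : IsMeasurablePartition A) {x : X} {i : ι} (hx : x ∈ A i) (j : ι) :
    x ∈ A j ↔ j = i := by
  refine ⟨fun hxj => ?_, fun h => h ▸ hx⟩
  by_contra hji
  exact disjoint_left.1 (hA.pairwise_disjoint hji) hxj hx

lemma mem_biUnion_iff (hA : IsMeasurablePartition A) {x : X} {i : ι} (hx : x ∈ A i)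
    (I : Set ι) : x ∈ ⋃ j ∈ I, A j ↔ i ∈ I := by
  simp only [mem_iUnion₂, hA.mem_iff_eq hx, exists_prop, exists_eq_right]

lemma image (hA : IsMeasurablePartition A) (e : X ≃ᵐ Y) :
    IsMeasurablePartition fun i => e '' A i where
  measurableSet i := e.measurableSet_image.2 (hA.measurableSet i)
  pairwise_disjoint _ _ hij := (disjoint_image_iff e.injective).2 (hA.pairwise_disjoint hij)
  iUnion_eq_univ := by
    rw [← image_iUnion, hA.iUnion_eq_univ, image_univ_of_surjective e.surjective]

lemma inter (hA : IsMeasurablePartition A) (hB : IsMeasurablePartition B) :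
    IsMeasurablePartition fun p : ι × κ => A p.1 ∩ B p.2 where
  measurableSet p := (hA.measurableSet p.1).inter (hB.measurableSet p.2)
  pairwise_disjoint p q hpq := by
    obtain h | h := not_and_or.1 (mt Prod.ext_iff.2 hpq)
    · exact (hA.pairwise_disjoint h).mono inter_subset_left inter_subset_left
    · exact (hB.pairwise_disjoint h).mono inter_subset_right inter_subset_right
  iUnion_eq_univ := eq_univ_of_forall fun x => by
    obtain ⟨i, hi⟩ := hA.exists_mem x
    obtain ⟨j, hj⟩ := hB.exists_mem x
    exact mem_iUnion.2 ⟨(i, j), hi, hj⟩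

lemma iInter [Countable ι] {A : ι → κ → Set X} (hA : ∀ i, IsMeasurablePartition (A i)) :
    IsMeasurablePartition fun c : ι → κ => ⋂ i, A i (c i) where
  measurableSet c := .iInter fun i => (hA i).measurableSet (c i)
  pairwise_disjoint c d hcd := by
    obtain ⟨i, hi⟩ := ne_iff.1 hcd
    exact ((hA i).pairwise_disjoint hi).mono (iInter_subset _ i) (iInter_subset _ i)
  iUnion_eq_univ := eq_univ_of_forall fun x => by
    choose c hc using fun i => (hA i).exists_mem x
    exact mem_iUnion.2 ⟨c, mem_iInter.2 hc⟩

lemma biUnion_iInter_eq {A : ι → κ → Set X} (hA : ∀ i, IsMeasurablePartition (A i))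
    (i : ι) (k : κ) : ⋃ c ∈ {c : ι → κ | c i = k}, ⋂ j, A j (c j) = A i k := by
  ext x
  simp only [mem_iUnion₂, mem_iInter, mem_ofPred_eq, exists_prop]
  constructor
  · rintro ⟨c, rfl, hc⟩
    exact hc i
  · intro hx
    choose c hc using fun j => (hA j).exists_mem x
    exact ⟨c, (((hA i).mem_iff_eq (hc i) k).1 hx).symm, hc⟩

lemma symmDiff_biUnion_eq (hA : IsMeasurablePartition A) (hB : IsMeasurablePartition B)
    (I : Set ι) (J : Set κ) :
    (⋃ i ∈ I, A i) ∆ (⋃ j ∈ J, B j)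
      = ⋃ p ∈ {p : ι × κ | ¬(p.1 ∈ I ↔ p.2 ∈ J)}, A p.1 ∩ B p.2 := by
  ext x
  obtain ⟨i, hi⟩ := hA.exists_mem x
  obtain ⟨j, hj⟩ := hB.exists_mem x
  rw [mem_symmDiff, hA.mem_biUnion_iff hi, hB.mem_biUnion_iff hj,
    (hA.inter hB).mem_biUnion_iff (i := (i, j)) ⟨hi, hj⟩, mem_ofPred_eq]
  tauto

lemma measureReal_biUnion_finset (hA : IsMeasurablePartition A) (μ : Measure X)
    [IsFiniteMeasure μ] (K : Finset ι) : μ.real (⋃ i ∈ K, A i) = ∑ i ∈ K, μ.real (A i) :=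
  MeasureTheory.measureReal_biUnion_finset (hA.pairwise_disjoint.set_pairwise _)
    fun i _ => hA.measurableSet i

lemma abs_measureReal_symmDiff_sub_le [Finite ι] [Finite κ] {μ ν : Measure X}
    [IsFiniteMeasure μ] [IsFiniteMeasure ν]
    (hA : IsMeasurablePartition A) (hB : IsMeasurablePartition B)
    (hA' : IsMeasurablePartition A') (hB' : IsMeasurablePartition B') {δ : ℝ}
    (hδ : ∀ i j, |μ.real (A i ∩ B j) - ν.real (A' i ∩ B' j)| ≤ δ) (I : Set ι) (J : Set κ) :
    |μ.real ((⋃ i ∈ I, A i) ∆ ⋃ j ∈ J, B j) - ν.real ((⋃ i ∈ I, A' i) ∆ ⋃ j ∈ J, B' j)|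
      ≤ Nat.card ι * Nat.card κ * δ := by
  classical
  have := Fintype.ofFinite ι
  have := Fintype.ofFinite κ
  set K := Finset.univ.filter fun p : ι × κ => ¬(p.1 ∈ I ↔ p.2 ∈ J)
  have hK : {p : ι × κ | ¬(p.1 ∈ I ↔ p.2 ∈ J)} = K := by simp [K]
  rw [hA.symmDiff_biUnion_eq hB, hA'.symmDiff_biUnion_eq hB', hK, Finset.set_biUnion_coe,
    Finset.set_biUnion_coe, (hA.inter hB).measureReal_biUnion_finset,
    (hA'.inter hB').measureReal_biUnion_finset, ← Finset.sum_sub_distrib]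
  refine (Finset.abs_sum_le_sum_abs _ _).trans ?_
  refine (Finset.sum_le_sum_of_subset_of_nonneg (Finset.subset_univ K)
    fun _ _ _ => abs_nonneg _).trans ?_
  refine (Finset.sum_le_card_nsmul _ _ δ fun p _ => hδ p.1 p.2).trans_eq ?_
  rw [Finset.card_univ, Fintype.card_prod, nsmul_eq_mul, Nat.cast_mul,
    Nat.card_eq_fintype_card, Nat.card_eq_fintype_card]

end IsMeasurablePartition

section Action

variable {G X : Type*} [Group G] (v : G →* Equiv.Perm X)

lemma perm_symm_eq_map_inv (g : G) : (v g).symm = v g⁻¹ := by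
  rw [map_inv, Equiv.Perm.inv_def]

variable [MeasurableSpace X]

def permMeasurableEquiv (hv : ∀ g, Measurable (v g)) (g : G) : X ≃ᵐ X where
  toEquiv := v g
  measurable_toFun := hv g
  measurable_invFun := by
    rw [perm_symm_eq_map_inv]
    exact hv g⁻¹

@[simp]
lemma coe_permMeasurableEquiv (hv : ∀ g, Measurable (v g)) (g : G) :
    ⇑(permMeasurableEquiv v hv g) = v g :=
  rfl

lemma measureReal_image_of_measurePreserving {μ : Measure X}
    (hv : ∀ g, MeasurePreserving (v g) μ μ) (g : G) (s : Set X) :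
    μ.real (v g '' s) = μ.real s := by
  have hv' : MeasurePreserving (permMeasurableEquiv v (fun g => (hv g).measurable) g⁻¹) μ μ :=
    hv g⁻¹
  rw [Equiv.image_eq_preimage_symm, perm_symm_eq_map_inv, measureReal_def, measureReal_def,
    ← hv'.measure_preimage_equiv s]
  rfl

end Action

section WordLength

variable {G : Type*} [Group G] {S : Set G}

lemma submonoid_closure_eq_top_of_inv_mem (hSsym : ∀ s ∈ S, s⁻¹ ∈ S)
    (hSgen : Subgroup.closure S = ⊤) : Submonoid.closure S = ⊤ := by
  have hS : S ∪ S⁻¹ = S := union_eq_left.2 fun s hs => by simpa using hSsym s⁻¹ hs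
  rw [← hS, ← Subgroup.closure_toSubmonoid, hSgen, Subgroup.top_toSubmonoid]

lemma wordLength_le_length {l : List G} (hl : ∀ x ∈ l, x ∈ S) :
    wordLength S l.prod ≤ l.length :=
  Nat.sInf_le ⟨l, rfl, hl, rfl⟩

lemma exists_length_eq_wordLength (hS : Submonoid.closure S = ⊤) (g : G) :
    ∃ l : List G, l.length = wordLength S g ∧ (∀ x ∈ l, x ∈ S) ∧ l.prod = g := by
  obtain ⟨l, hl, rfl⟩ := Submonoid.exists_list_of_mem_closure (hS ▸ Submonoid.mem_top g)
  exact Nat.sInf_mem (s := {n | ∃ l : List G, l.length = n ∧ (∀ x ∈ l, x ∈ S) ∧ l.prod = _})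
    ⟨l.length, l, rfl, hl, rfl⟩

lemma eq_one_of_wordLength_eq_zero (hS : Submonoid.closure S = ⊤) {g : G}
    (hg : wordLength S g = 0) : g = 1 := by
  obtain ⟨l, hlen, -, rfl⟩ := exists_length_eq_wordLength hS g
  rw [List.eq_nil_of_length_eq_zero (hlen.trans hg), List.prod_nil]

lemma wordLength_mul_le (hS : Submonoid.closure S = ⊤) {s : G} (hs : s ∈ S) (g : G) :
    wordLength S (s * g) ≤ wordLength S g + 1 := by
  obtain ⟨l, hlen, hl, rfl⟩ := exists_length_eq_wordLength hS g
  rw [← hlen, ← List.prod_cons]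
  exact wordLength_le_length (List.forall_mem_cons.2 ⟨hs, hl⟩)

lemma exists_mul_of_wordLength_eq_succ (hS : Submonoid.closure S = ⊤) {g : G} {k : ℕ}
    (hg : wordLength S g = k + 1) : ∃ s ∈ S, ∃ g', g = s * g' ∧ wordLength S g' = k := by
  obtain ⟨_ | ⟨s, t⟩, hlen, hl, rfl⟩ := exists_length_eq_wordLength hS g
  · rw [← hlen] at hg
    simp at hg
  obtain ⟨hs, ht⟩ := List.forall_mem_cons.1 hl
  refine ⟨s, hs, t.prod, List.prod_cons, le_antisymm ?_ ?_⟩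
  · have := wordLength_le_length ht
    simp only [List.length_cons] at hlen
    omega
  · have := wordLength_mul_le hS hs t.prod
    rw [← List.prod_cons, hg] at this
    omega

end WordLength

lemma mul_self_mul_inv_sq_div_four_le {x ε c : ℝ} (hε : 0 ≤ ε) (hc : 0 ≤ c) :
    x * x * (ε * (x ^ 2)⁻¹ * c⁻¹ / 4) ≤ ε / (2 * c) := by
  have hεc : 0 ≤ ε * c⁻¹ := by positivity
  calc _ = x ^ 2 * (x ^ 2)⁻¹ * (ε * c⁻¹ / 4) := by ring
    _ ≤ ε * c⁻¹ / 4 := mul_le_of_le_one_left (by positivity) mul_inv_le_one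
    _ ≤ ε * c⁻¹ / 2 := by linarith
    _ = ε / (2 * c) := by ring

theorem measureReal_symmDiff_image_le_mul_wordLength {G X : Type*} [Group G]
    [MeasurableSpace X] {μ : Measure X} [IsFiniteMeasure μ] {w : G →* Equiv.Perm X}
    (hw : ∀ g, MeasurePreserving (w g) μ μ) {S : Set G} (hS : Submonoid.closure S = ⊤)
    {r : ℕ} {F : Finset G} (hF : ∀ g, g ∈ F ↔ wordLength S g ≤ r) (h1 : (1 : G) ∈ F)
    (U : F → Set X) {δ : ℝ}
    (hstep : ∀ g g' : F, ∀ s ∈ S, (g : G) = s * g' → μ.real (U g ∆ (w s '' U g')) ≤ δ)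
    (g : F) : μ.real (U g ∆ (w g '' U ⟨1, h1⟩)) ≤ δ * wordLength S g := by
  suffices ∀ k (g : G) (hg : g ∈ F), wordLength S g = k →
      μ.real (U ⟨g, hg⟩ ∆ (w g '' U ⟨1, h1⟩)) ≤ δ * k from this _ g g.2 rfl
  intro k
  induction k with
  | zero =>
    intro g hg hk
    obtain rfl := eq_one_of_wordLength_eq_zero hS hk
    simp
  | succ k ih =>
    intro g hg hk
    obtain ⟨s, hs, g', rfl, hg'k⟩ := exists_mul_of_wordLength_eq_succ hS hk
    have hg' : g' ∈ F := (hF g').2 (by have := (hF _).1 hg; omega)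
    calc μ.real (U ⟨s * g', hg⟩ ∆ (w (s * g') '' U ⟨1, h1⟩))
        ≤ μ.real (U ⟨s * g', hg⟩ ∆ (w s '' U ⟨g', hg'⟩))
          + μ.real ((w s '' U ⟨g', hg'⟩) ∆ (w (s * g') '' U ⟨1, h1⟩)) :=
          measureReal_symmDiff_le _
      _ = μ.real (U ⟨s * g', hg⟩ ∆ (w s '' U ⟨g', hg'⟩))
          + μ.real (U ⟨g', hg'⟩ ∆ (w g' '' U ⟨1, h1⟩)) := by
          rw [map_mul, Equiv.Perm.coe_mul, image_comp, ← image_symmDiff (w s).injective,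
            measureReal_image_of_measurePreserving w hw]
      _ ≤ δ + δ * k := add_le_add (hstep _ _ s hs rfl) (ih g' hg' hg'k)
      _ = δ * (k + 1 : ℕ) := by push_cast; ring

open MeasureTheory in
theorem stmt11 {G X : Type*} [Group G] [MeasurableSpace X]
    (μ : Measure X) [IsProbabilityMeasure μ]
    (v w : G →* Equiv.Perm X)
    (hv : ∀ g : G, MeasurePreserving (v g) μ μ)
    (hw : ∀ g : G, MeasurePreserving (w g) μ μ)
    (S : Finset G) (hSsym : ∀ s ∈ S, s⁻¹ ∈ S)
    (hSgen : Subgroup.closure (S : Set G) = ⊤)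
    (r : ℕ) (F : Finset G)
    (hF : ∀ g : G, g ∈ F ↔ wordLength (S : Set G) g ≤ r)
    (h1 : (1 : G) ∈ F)
    (n : ℕ) (P : Fin n → Set X)
    (hPm : ∀ i, MeasurableSet (P i))
    (hPd : Pairwise (Function.onFun Disjoint P))
    (hPc : (⋃ i, P i) = Set.univ)
    -- `β` assigns to each atom `⋂_{g ∈ F} v_g P_{c g}` of the refinement `P' = ⋁_{g∈F} gP`
    -- the corresponding atom of `Q'`; `Q'` is a partition of `X`.
    (β : (F → Fin n) → Set X)
    (hβm : ∀ c, MeasurableSet (β c))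
    (hβd : Pairwise (Function.onFun Disjoint β))
    (hβc : (⋃ c, β c) = Set.univ)
    (ε : ℝ) (hε : 0 < ε)
    (hsmall : ∀ (c c' : F → Fin n), ∀ s ∈ S,
      |(μ ((⋂ g : F, (v (g : G)) '' P (c g)) ∩ (v s) '' (⋂ g : F, (v (g : G)) '' P (c' g)))).toReal
        - (μ (β c ∩ (w s) '' β c')).toReal|
        < ε * (((n : ℝ) ^ F.card) ^ 2)⁻¹ * ((F.card : ℝ))⁻¹ / 4) :
    ∀ (i : Fin n) (g : G) (hg : g ∈ F),
      (μ (symmDiff (⋃ c ∈ {c : F → Fin n | c ⟨g, hg⟩ = i}, β c)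
          ((w g) '' ⋃ c ∈ {c : F → Fin n | c ⟨1, h1⟩ = i}, β c))).toReal
        ≤ ε * (wordLength (S : Set G) g : ℝ) / (2 * F.card) := by
  intro i g hg
  have hvm : ∀ g, Measurable (v g) := fun g => (hv g).measurable
  have hwm : ∀ g, Measurable (w g) := fun g => (hw g).measurable
  have hP : IsMeasurablePartition P := ⟨hPm, hPd, hPc⟩
  have hβ : IsMeasurablePartition β := ⟨hβm, hβd, hβc⟩
  have hA := IsMeasurablePartition.iInter fun g : F => hP.image (permMeasurableEquiv v hvm g)
  have hAi : ∀ g : F,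
      ⋃ c ∈ {c : F → Fin n | c g = i}, (⋂ g : F, v g '' P (c g)) = v g '' P i :=
    fun g => IsMeasurablePartition.biUnion_iInter_eq
      (fun g : F => hP.image (permMeasurableEquiv v hvm g)) g i
  have hN : (Nat.card (F → Fin n) : ℝ) = (n : ℝ) ^ F.card := by simp [Nat.card_fun]
  have hstep : ∀ g g' : F, ∀ s ∈ (S : Set G), (g : G) = s * g' →
      μ.real ((⋃ c ∈ {c : F → Fin n | c g = i}, β c) ∆
        (w s '' ⋃ c ∈ {c : F → Fin n | c g' = i}, β c)) ≤ ε / (2 * F.card) := by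
    rintro g g' s hs hgs
    have := hA.abs_measureReal_symmDiff_sub_le (hA.image (permMeasurableEquiv v hvm s)) hβ
      (hβ.image (permMeasurableEquiv w hwm s)) (fun c c' => (hsmall c c' s hs).le)
      {c | c g = i} {c | c g' = i}
    -- on the `v` side both sets are `v g '' P i`, so that symmetric difference is empty
    simp only [coe_permMeasurableEquiv] at this
    rw [← image_iUnion₂, ← image_iUnion₂, hAi, hAi] at this
    simp only [image_image, ← Equiv.Perm.mul_apply, ← map_mul,
      ← hgs, symmDiff_self, bot_eq_empty, measureReal_empty, zero_sub, abs_neg,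
      abs_of_nonneg measureReal_nonneg] at this
    rw [hN] at this
    exact this.trans (mul_self_mul_inv_sq_div_four_le hε.le (Nat.cast_nonneg _))
  exact (measureReal_symmDiff_image_le_mul_wordLength hw
    (submonoid_closure_eq_top_of_inv_mem hSsym hSgen) hF h1 _ hstep ⟨g, hg⟩).trans_eq (by ring)
end

section
/- Let G be a countably generated free group with free generating set {s₁, s₂, …}, let G_n be the subgroup generated by {s₁,…,s_n}, and suppose that for every finitely generated free group the orbit-equivalence class of any essentially free pmp action is weakly dense in the space of actions. Then for any essentially free a ∈ A(G,X,μ), any b ∈ A(G,X,μ), any finite F ⊂ G_n, finite partition {P₁,…,Pₙ} and ε > 0, there exists a' ∈ A(G,X,μ) orbit-equivalent to a and a partition {Q₁,…,Qₙ} with |μ(P_i ∩ b_g P_j) − μ(Q_i ∩ a'_g Q_j)| < ε for all g ∈ F; consequently the orbit-equivalence class of a is dense in A(G,X,μ). -/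
/-!
Restrict `a` and `b` to `G_n` through the embedding `FreeGroup.map Fin.val`, and let the hypothesis
produce `a''` on `G_n`, orbit equivalent to `a|G_n` through `T`, whose partition statistics on `F`
approximate those of `b`. Extend `a''` to `G` by letting every other generator `sᵢ` act as
`T a(sᵢ) T⁻¹`. After conjugation by `T⁻¹` the extension agrees with `a` on the generators outside
`G_n`, and it has the same orbits as `a` on `G_n` at every point of an `a`-invariant conull set;
on such a set, agreement of orbits on generators propagates to the whole group.
-/

open MeasureTheory Function Set Equiv

section Orbits

variable {G H X : Type*} [Group G] [Group H]

theorem range_apply_subset_of_closure_eq_top (a : G →* Perm X) (c : H →* Perm X) {E : Set X}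
    (hE : ∀ x ∈ E, ∀ g, a g x ∈ E) {S : Set G} (hS : Subgroup.closure S = ⊤)
    (hgen : ∀ s ∈ S, ∀ x ∈ E, a s x ∈ range (c · x)) :
    ∀ x ∈ E, range (a · x) ⊆ range (c · x) := by
  rintro x hx _ ⟨g, rfl⟩
  have hg : g ∈ Subgroup.closure S := hS ▸ Subgroup.mem_top g
  induction hg using Subgroup.closure_induction generalizing x with
  | mem s hs => exact hgen s hs x hx
  | one => exact ⟨1, by simp⟩
  | mul g₁ g₂ _ _ ih₁ ih₂ =>
    obtain ⟨h₂, e₂⟩ := ih₂ x hx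
    obtain ⟨h₁, e₁⟩ := ih₁ _ (hE x hx g₂)
    exact ⟨h₁ * h₂, by simp [e₂, e₁]⟩
  | inv g _ ih =>
    obtain ⟨h, e⟩ := ih _ (hE x hx g⁻¹)
    refine ⟨h⁻¹, ?_⟩
    simp only at e ⊢
    rw [map_inv, Perm.inv_eq_iff_eq, e, ← Perm.mul_apply, ← map_mul, mul_inv_cancel]
    simp

theorem range_apply_superset_of_closure_eq_top (a : G →* Perm X) (c : H →* Perm X) {E : Set X}
    (hE : ∀ x ∈ E, ∀ g, a g x ∈ E) {S : Set H} (hS : Subgroup.closure S = ⊤)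
    (hgen : ∀ s ∈ S, ∀ x ∈ E, c s x ∈ range (a · x) ∧ c s⁻¹ x ∈ range (a · x)) :
    ∀ x ∈ E, range (c · x) ⊆ range (a · x) := by
  rintro x hx _ ⟨h, rfl⟩
  have hh : h ∈ Subgroup.closure S := hS ▸ Subgroup.mem_top h
  induction hh using Subgroup.closure_induction'' generalizing x with
  | mem s hs => exact (hgen s hs x hx).1
  | inv_mem s hs => exact (hgen s hs x hx).2
  | one => exact ⟨1, by simp⟩
  | mul h₁ h₂ _ _ ih₁ ih₂ =>
    obtain ⟨g₂, e₂⟩ := ih₂ x hx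
    obtain ⟨g₁, e₁⟩ := ih₁ _ (hE x hx g₂)
    exact ⟨g₁ * g₂, by simp [← e₂, e₁]⟩

theorem range_apply_perm_apply (ρ : G →* Perm X) (T : Perm X) (x : X) :
    range (ρ · (T x)) = T '' range ((MulAut.conj T⁻¹).toMonoidHom.comp ρ · x) := by
  rw [← range_comp]
  simp [comp_def]

end Orbits

namespace FreeGroup

variable {α β M N : Type*} [Group M] [Group N]

noncomputable def extendAlong (ι : β → α) (c : FreeGroup β →* M) (a : FreeGroup α →* M) :
    FreeGroup α →* M :=
  lift (extend ι (fun j => c (of j)) (fun i => a (of i)))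

variable {ι : β → α} {c : FreeGroup β →* M} {a : FreeGroup α →* M}

theorem extendAlong_comp_map (hι : Injective ι) : (extendAlong ι c a).comp (map ι) = c :=
  ext_hom _ _ fun j => by simp [extendAlong, hι.extend_apply]

theorem extendAlong_of_notMem_range {i : α} (hi : i ∉ range ι) :
    extendAlong ι c a (of i) = a (of i) := by
  simp [extendAlong, extend_apply' _ _ _ (by simpa using hi)]

theorem comp_extendAlong (ψ : M →* N) :
    ψ.comp (extendAlong ι c a) = extendAlong ι (ψ.comp c) (ψ.comp a) :=
  ext_hom _ _ fun i => by simp [extendAlong, apply_extend ψ, comp_def]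

theorem extendAlong_mem {K : Subgroup M} (hc : ∀ g, c g ∈ K) (ha : ∀ g, a g ∈ K)
    (g : FreeGroup α) : extendAlong ι c a g ∈ K := by
  refine range_lift_le ?_ ⟨g, rfl⟩
  rintro _ ⟨i, rfl⟩
  classical
  rw [extend_def]
  split_ifs
  exacts [hc _, ha _]

end FreeGroup

namespace FreeGroup

variable {α β X : Type*} {ι : β → α}

theorem range_extendAlong_apply (hι : Injective ι) (c : FreeGroup β →* Perm X)
    (a : FreeGroup α →* Perm X) {E : Set X} (hE : ∀ x ∈ E, ∀ g, a g x ∈ E)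
    (horb : ∀ x ∈ E, range ((a.comp (map ι)) · x) = range (c · x)) :
    ∀ x ∈ E, range (extendAlong ι c a · x) = range (a · x) := by
  set e := extendAlong ι c a
  have he : ∀ h, e (map ι h) = c h := DFunLike.congr_fun (extendAlong_comp_map hι)
  have hac : ∀ x ∈ E, ∀ h, a (map ι h) x ∈ range (e · x) := fun x hx h => by
    obtain ⟨h', e'⟩ : a (map ι h) x ∈ range (c · x) := horb x hx ▸ ⟨h, rfl⟩
    exact ⟨map ι h', by simp only [he]; exact e'⟩
  have hca : ∀ x ∈ E, ∀ h, e (map ι h) x ∈ range (a · x) := fun x hx h => by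
    obtain ⟨h', e'⟩ : c h x ∈ range ((a.comp (map ι)) · x) := (horb x hx).symm ▸ ⟨h, rfl⟩
    exact ⟨map ι h', by simp only [he]; exact e'⟩
  intro x hx
  refine (range_apply_superset_of_closure_eq_top a e hE (closure_range_of α) ?_ x hx).antisymm
    (range_apply_subset_of_closure_eq_top a e hE (closure_range_of α) ?_ x hx)
  · rintro _ ⟨i, rfl⟩ y hy
    by_cases hi : i ∈ range ι
    · obtain ⟨j, rfl⟩ := hi
      rw [← map.of, ← _root_.map_inv]
      exact ⟨hca y hy _, hca y hy _⟩
    · rw [_root_.map_inv, extendAlong_of_notMem_range hi, ← _root_.map_inv]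
      exact ⟨⟨_, rfl⟩, ⟨_, rfl⟩⟩
  · rintro _ ⟨i, rfl⟩ y hy
    by_cases hi : i ∈ range ι
    · obtain ⟨j, rfl⟩ := hi
      rw [← map.of]
      exact hac y hy _
    · exact ⟨of i, by simp only [e, extendAlong_of_notMem_range hi]⟩

end FreeGroup

section MeasurePreserving

variable {X : Type*} [MeasurableSpace X]

/-- `σ.symm` need not be measurable, so its measure preservation is part of the condition. -/
def measurePreservingPerm (μ : Measure X) : Subgroup (Perm X) where
  carrier := {σ | MeasurePreserving σ μ μ ∧ MeasurePreserving σ.symm μ μ}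
  mul_mem' hσ hτ := ⟨hσ.1.comp hτ.1, hτ.2.comp hσ.2⟩
  one_mem' := ⟨MeasurePreserving.id μ, MeasurePreserving.id μ⟩
  inv_mem' hσ := ⟨hσ.2, hσ.1⟩

variable {μ : Measure X} {G : Type*} [Group G]

theorem mem_measurePreservingPerm {ρ : G →* Perm X} (hρ : ∀ g, MeasurePreserving (ρ g) μ μ)
    (g : G) : ρ g ∈ measurePreservingPerm μ :=
  ⟨hρ g, by simpa using hρ g⁻¹⟩

theorem exists_invariant_conull_of_ae [Countable G] {a : G →* Perm X}
    (ha : ∀ g, MeasurePreserving (a g) μ μ) {p : X → Prop} (hp : ∀ᵐ x ∂μ, p x) :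
    ∃ E : Set X, (∀ᵐ x ∂μ, x ∈ E) ∧ (∀ x ∈ E, ∀ g, a g x ∈ E) ∧ ∀ x ∈ E, p x :=
  ⟨{x | ∀ g, p (a g x)}, ae_all_iff.2 fun g => (ha g).quasiMeasurePreserving.ae hp,
    fun x hx g g' => by simpa using hx (g' * g), fun x hx => by simpa using hx 1⟩

end MeasurePreserving

section ExtensionStep

open FreeGroup

variable {α β X : Type*} [MeasurableSpace X] {μ : Measure X} {ι : β → α}
  {a : FreeGroup α →* Perm X} {a'' : FreeGroup β →* Perm X} {T : Perm X}

theorem measurePreserving_extendAlong_conj (ha : ∀ g, MeasurePreserving (a g) μ μ)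
    (ha'' : ∀ g, MeasurePreserving (a'' g) μ μ) (hT : MeasurePreserving T μ μ)
    (hTs : MeasurePreserving T.symm μ μ) (g : FreeGroup α) :
    MeasurePreserving (extendAlong ι a'' ((MulAut.conj T).toMonoidHom.comp a) g) μ μ := by
  set K := measurePreservingPerm μ
  have hTK : T ∈ K := ⟨hT, hTs⟩
  refine (extendAlong_mem (K := K) (mem_measurePreservingPerm ha'') (fun g => ?_) g).1
  exact K.mul_mem (K.mul_mem hTK (mem_measurePreservingPerm ha g)) (K.inv_mem hTK)

theorem ae_image_range_extendAlong_conj [Countable (FreeGroup α)] (hι : Injective ι)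
    (ha : ∀ g, MeasurePreserving (a g) μ μ)
    (horb : ∀ᵐ x ∂μ, T '' range ((a.comp (map ι)) · x) = range (a'' · (T x))) :
    ∀ᵐ x ∂μ, T '' range (a · x) =
      range (extendAlong ι a'' ((MulAut.conj T).toMonoidHom.comp a) · (T x)) := by
  set c := (MulAut.conj T⁻¹).toMonoidHom.comp a''
  have hconj : (MulAut.conj T⁻¹).toMonoidHom.comp
      (extendAlong ι a'' ((MulAut.conj T).toMonoidHom.comp a)) = extendAlong ι c a := by
    rw [comp_extendAlong]
    congr
    ext g x
    simp
  have horb' : ∀ᵐ x ∂μ, range ((a.comp (map ι)) · x) = range (c · x) := by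
    filter_upwards [horb] with x hx
    apply T.injective.image_injective
    rw [hx, range_apply_perm_apply]
  obtain ⟨E, hE, hEinv, hEorb⟩ := exists_invariant_conull_of_ae ha horb'
  filter_upwards [hE] with x hx
  rw [range_apply_perm_apply, hconj, range_extendAlong_apply hι c a hEinv hEorb x hx]

end ExtensionStep

open MeasureTheory in
theorem stmt17_general {X : Type*} [MeasurableSpace X]
    (μ : Measure X)
    -- density of orbit-equivalence classes for finitely generated free groups:
    (hfg : ∀ (m : ℕ) (a b : FreeGroup (Fin m) →* Equiv.Perm X),
      (∀ g, MeasurePreserving (a g) μ μ) → (∀ g, MeasurePreserving (b g) μ μ) →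
      (∀ᵐ x ∂μ, ∀ g, g ≠ 1 → a g x ≠ x) →
      ∀ ε > (0 : ℝ), ∀ (n : ℕ) (P : Fin n → Set X),
        (∀ i, MeasurableSet (P i)) → Pairwise (Function.onFun Disjoint P) →
        (⋃ i, P i) = Set.univ →
        ∀ F : Finset (FreeGroup (Fin m)),
        ∃ a' : FreeGroup (Fin m) →* Equiv.Perm X,
          (∀ g, MeasurePreserving (a' g) μ μ) ∧
          (∃ T : Equiv.Perm X, MeasurePreserving T μ μ ∧ MeasurePreserving T.symm μ μ ∧
            ∀ᵐ x ∂μ, T '' {y | ∃ g, a g x = y} = {y | ∃ g, a' g (T x) = y}) ∧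
          ∃ Q : Fin n → Set X,
            (∀ i, MeasurableSet (Q i)) ∧ Pairwise (Function.onFun Disjoint Q) ∧
            (⋃ i, Q i) = Set.univ ∧
            ∀ g ∈ F, ∀ i j,
              |(μ (P i ∩ (b g) '' P j)).toReal - (μ (Q i ∩ (a' g) '' Q j)).toReal| < ε)
    (a b : FreeGroup ℕ →* Equiv.Perm X)
    (ha : ∀ g, MeasurePreserving (a g) μ μ) (hb : ∀ g, MeasurePreserving (b g) μ μ)
    (hfree : ∀ᵐ x ∂μ, ∀ g, g ≠ 1 → a g x ≠ x)
    (nn : ℕ) (F : Finset (FreeGroup ℕ))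
    -- `F` is contained in the subgroup `G_nn` generated by the first `nn` free generators
    (hF : ∀ g ∈ F, g ∈ Subgroup.closure (FreeGroup.of '' {i : ℕ | i < nn}))
    (ε : ℝ) (hε : 0 < ε)
    (n : ℕ) (P : Fin n → Set X)
    (hPm : ∀ i, MeasurableSet (P i)) (hPd : Pairwise (Function.onFun Disjoint P))
    (hPc : (⋃ i, P i) = Set.univ) :
    ∃ a' : FreeGroup ℕ →* Equiv.Perm X,
      (∀ g, MeasurePreserving (a' g) μ μ) ∧
      (∃ T : Equiv.Perm X, MeasurePreserving T μ μ ∧ MeasurePreserving T.symm μ μ ∧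
        ∀ᵐ x ∂μ, T '' {y | ∃ g, a g x = y} = {y | ∃ g, a' g (T x) = y}) ∧
      ∃ Q : Fin n → Set X,
        (∀ i, MeasurableSet (Q i)) ∧ Pairwise (Function.onFun Disjoint Q) ∧
        (⋃ i, Q i) = Set.univ ∧
        ∀ g ∈ F, ∀ i j,
          |(μ (P i ∩ (b g) '' P j)).toReal - (μ (Q i ∩ (a' g) '' Q j)).toReal| < ε := by
  set φ := FreeGroup.map (Fin.val : Fin nn → ℕ)
  have hφ : Injective φ := FreeGroup.map_injective Fin.val_injective
  have hFφ : ∀ g ∈ F, g ∈ φ.range := by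
    rwa [FreeGroup.range_map, Fin.range_val]
  have hfreeφ : ∀ᵐ x ∂μ, ∀ h, h ≠ 1 → a (φ h) x ≠ x := by
    filter_upwards [hfree] with x hx h hh
    exact hx (φ h) ((map_ne_one_iff φ hφ).2 hh)
  obtain ⟨a'', ha'', ⟨T, hT, hTs, horb⟩, Q, hQm, hQd, hQc, hQ⟩ :=
    hfg nn (a.comp φ) (b.comp φ) (fun _ => ha _) (fun _ => hb _) hfreeφ ε hε n P hPm hPd hPc
      (F.preimage φ hφ.injOn)
  set a' := FreeGroup.extendAlong Fin.val a'' ((MulAut.conj T).toMonoidHom.comp a)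
  have ha'φ : ∀ h, a' (φ h) = a'' h :=
    DFunLike.congr_fun (FreeGroup.extendAlong_comp_map Fin.val_injective)
  refine ⟨a', measurePreserving_extendAlong_conj ha ha'' hT hTs,
    ⟨T, hT, hTs, ae_image_range_extendAlong_conj Fin.val_injective ha horb⟩,
    Q, hQm, hQd, hQc, ?_⟩
  rintro _ hg i j
  obtain ⟨h, rfl⟩ := hFφ _ hg
  rw [ha'φ]
  exact hQ h (Finset.mem_preimage.2 hg) i j

open MeasureTheory in
theorem stmt17 {X : Type*} [MeasurableSpace X] [StandardBorelSpace X]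
    (μ : Measure X) [IsProbabilityMeasure μ] [NullSingletonClass μ]
    -- density of orbit-equivalence classes for finitely generated free groups:
    (hfg : ∀ (m : ℕ) (a b : FreeGroup (Fin m) →* Equiv.Perm X),
      (∀ g, MeasurePreserving (a g) μ μ) → (∀ g, MeasurePreserving (b g) μ μ) →
      (∀ᵐ x ∂μ, ∀ g, g ≠ 1 → a g x ≠ x) →
      ∀ ε > (0 : ℝ), ∀ (n : ℕ) (P : Fin n → Set X),
        (∀ i, MeasurableSet (P i)) → Pairwise (Function.onFun Disjoint P) →
        (⋃ i, P i) = Set.univ →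
        ∀ F : Finset (FreeGroup (Fin m)),
        ∃ a' : FreeGroup (Fin m) →* Equiv.Perm X,
          (∀ g, MeasurePreserving (a' g) μ μ) ∧
          (∃ T : Equiv.Perm X, MeasurePreserving T μ μ ∧ MeasurePreserving T.symm μ μ ∧
            ∀ᵐ x ∂μ, T '' {y | ∃ g, a g x = y} = {y | ∃ g, a' g (T x) = y}) ∧
          ∃ Q : Fin n → Set X,
            (∀ i, MeasurableSet (Q i)) ∧ Pairwise (Function.onFun Disjoint Q) ∧
            (⋃ i, Q i) = Set.univ ∧
            ∀ g ∈ F, ∀ i j,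
              |(μ (P i ∩ (b g) '' P j)).toReal - (μ (Q i ∩ (a' g) '' Q j)).toReal| < ε)
    (a b : FreeGroup ℕ →* Equiv.Perm X)
    (ha : ∀ g, MeasurePreserving (a g) μ μ) (hb : ∀ g, MeasurePreserving (b g) μ μ)
    (hfree : ∀ᵐ x ∂μ, ∀ g, g ≠ 1 → a g x ≠ x)
    (nn : ℕ) (F : Finset (FreeGroup ℕ))
    -- `F` is contained in the subgroup `G_nn` generated by the first `nn` free generators
    (hF : ∀ g ∈ F, g ∈ Subgroup.closure (FreeGroup.of '' {i : ℕ | i < nn}))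
    (ε : ℝ) (hε : 0 < ε)
    (n : ℕ) (P : Fin n → Set X)
    (hPm : ∀ i, MeasurableSet (P i)) (hPd : Pairwise (Function.onFun Disjoint P))
    (hPc : (⋃ i, P i) = Set.univ) :
    ∃ a' : FreeGroup ℕ →* Equiv.Perm X,
      (∀ g, MeasurePreserving (a' g) μ μ) ∧
      (∃ T : Equiv.Perm X, MeasurePreserving T μ μ ∧ MeasurePreserving T.symm μ μ ∧
        ∀ᵐ x ∂μ, T '' {y | ∃ g, a g x = y} = {y | ∃ g, a' g (T x) = y}) ∧
      ∃ Q : Fin n → Set X,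
        (∀ i, MeasurableSet (Q i)) ∧ Pairwise (Function.onFun Disjoint Q) ∧
        (⋃ i, Q i) = Set.univ ∧
        ∀ g ∈ F, ∀ i j,
          |(μ (P i ∩ (b g) '' P j)).toReal - (μ (Q i ∩ (a' g) '' Q j)).toReal| < ε :=
  stmt17_general μ hfg a b ha hb hfree nn F hF ε hε n P hPm hPd hPc
end
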